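/- Every point on the geodesic shortest path from a site s to a point x in s's Voronoi cell also lies in s's Voronoi cell (geodesic star-shapedness of cells): if d(x,s) ≤ d(x,t) for all t ∈ S and y lies on the shortest path from s to x, then d(y,s) ≤ d(y,t) for all t ∈ S. -/

import Mathlib

/-!
Geodesic distance is symmetric (reverse a path) and satisfies the triangle inequality
(concatenate two paths). Hence
`d(y,x) + d(y,s) = d(s,x) ≤ d(x,t) ≤ d(x,y) + d(y,t)`,
and `d(y,x)` is finite because `d(s,x)` is, so it cancels.
-/

open Set ENNReal

noncomputable section

abbrev E2 : Type := EuclideanSpace ℝ (Fin 2)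

/-- The paths from `p` to `q` staying inside `P`, parameterized on `[0,1]`. -/
def pathsIn (P : Set E2) (p q : E2) : Set (ℝ → E2) :=
  {γ | ContinuousOn γ (Icc 0 1) ∧ MapsTo γ (Icc 0 1) P ∧ γ 0 = p ∧ γ 1 = q}

/-- The geodesic distance in `P`: the infimum of the lengths (total variations)
of paths from `p` to `q` lying entirely in `P`. -/
def geoDist (P : Set E2) (p q : E2) : ℝ≥0∞ :=
  ⨅ γ ∈ pathsIn P p q, eVariationOn γ (Icc 0 1)

section Variation

variable {E : Type*} [PseudoEMetricSpace E]

theorem eVariationOn_comp_one_sub (f : ℝ → E) :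
    eVariationOn (fun u => f (1 - u)) (Icc 0 1) = eVariationOn f (Icc 0 1) := by
  have hanti : AntitoneOn (fun u : ℝ => 1 - u) (Icc 0 1) :=
    fun _ _ _ _ h => sub_le_sub_left h 1
  rw [← Function.comp_def, eVariationOn.comp_eq_of_antitoneOn f _ hanti]
  simp only [image_const_sub_Icc, sub_self, sub_zero]

theorem eVariationOn_comp_mul_add (f : ℝ → E) {a : ℝ} (ha : 0 < a) (b c d : ℝ) :
    eVariationOn (fun u => f (a * u + b)) (Icc c d) =
      eVariationOn f (Icc (a * c + b) (a * d + b)) := by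
  have hmono : MonotoneOn (fun u : ℝ => a * u + b) (Icc c d) :=
    fun _ _ _ _ h => by dsimp only; gcongr
  rw [← Function.comp_def, eVariationOn.comp_eq_of_monotoneOn f _ hmono, image_affine_Icc' ha]

end Variation

def concatPath {X : Type*} (γ δ : ℝ → X) (u : ℝ) : X :=
  if u ≤ 1 / 2 then γ (2 * u) else δ (2 * u - 1)

section Concat

variable {X : Type*} {γ δ : ℝ → X}

theorem concatPath_eqOn_left : EqOn (concatPath γ δ) (fun u => γ (2 * u)) (Icc 0 (1 / 2)) :=
  fun _ hu => if_pos hu.2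

theorem concatPath_eqOn_right (h : γ 1 = δ 0) :
    EqOn (concatPath γ δ) (fun u => δ (2 * u - 1)) (Icc (1 / 2) 1) := by
  rintro u ⟨hu, -⟩
  rcases hu.eq_or_lt with rfl | hu
  · norm_num [concatPath, h]
  · exact if_neg hu.not_ge

theorem mapsTo_two_mul : MapsTo (fun u : ℝ => 2 * u) (Icc 0 (1 / 2)) (Icc 0 1) :=
  fun _ ⟨h0, h1⟩ => ⟨by linarith, by linarith⟩

theorem mapsTo_two_mul_sub_one : MapsTo (fun u : ℝ => 2 * u - 1) (Icc (1 / 2) 1) (Icc 0 1) :=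
  fun _ ⟨h0, h1⟩ => ⟨by linarith, by linarith⟩

theorem Icc_zero_half_union_Icc_half_one : Icc (0 : ℝ) (1 / 2) ∪ Icc (1 / 2) 1 = Icc 0 1 :=
  Icc_union_Icc_eq_Icc (by norm_num) (by norm_num)

theorem continuousOn_concatPath [TopologicalSpace X] (hγ : ContinuousOn γ (Icc 0 1))
    (hδ : ContinuousOn δ (Icc 0 1)) (h : γ 1 = δ 0) :
    ContinuousOn (concatPath γ δ) (Icc 0 1) := by
  rw [← Icc_zero_half_union_Icc_half_one]
  refine ContinuousOn.union_of_isClosed ?_ ?_ isClosed_Icc isClosed_Icc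
  · exact (hγ.comp (by fun_prop) mapsTo_two_mul).congr concatPath_eqOn_left
  · exact (hδ.comp (by fun_prop) mapsTo_two_mul_sub_one).congr (concatPath_eqOn_right h)

theorem mapsTo_concatPath {P : Set X} (hγ : MapsTo γ (Icc 0 1) P) (hδ : MapsTo δ (Icc 0 1) P)
    (h : γ 1 = δ 0) : MapsTo (concatPath γ δ) (Icc 0 1) P := by
  rw [← Icc_zero_half_union_Icc_half_one]
  rintro u (hu | hu)
  · rw [concatPath_eqOn_left hu]; exact hγ (mapsTo_two_mul hu)
  · rw [concatPath_eqOn_right h hu]; exact hδ (mapsTo_two_mul_sub_one hu)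

theorem eVariationOn_concatPath [PseudoEMetricSpace X] (h : γ 1 = δ 0) :
    eVariationOn (concatPath γ δ) (Icc 0 1) =
      eVariationOn γ (Icc 0 1) + eVariationOn δ (Icc 0 1) := by
  have hsplit := eVariationOn.Icc_add_Icc (concatPath γ δ) (s := univ) (a := (0 : ℝ))
    (b := 1 / 2) (c := 1) (by norm_num) (by norm_num) (mem_univ _)
  simp only [univ_inter] at hsplit
  rw [← hsplit, eVariationOn.eq_of_eqOn concatPath_eqOn_left,
    eVariationOn.eq_of_eqOn (concatPath_eqOn_right h)]
  have hl := eVariationOn_comp_mul_add γ two_pos 0 0 (1 / 2)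
  have hr := eVariationOn_comp_mul_add δ two_pos (-1) (1 / 2) 1
  norm_num at hl hr
  simp only [← sub_eq_add_neg] at hr
  rw [hl, hr]

end Concat

section Paths

variable {P : Set E2} {p q r : E2} {γ δ : ℝ → E2}

theorem comp_one_sub_mem_pathsIn (hγ : γ ∈ pathsIn P p q) :
    (fun u => γ (1 - u)) ∈ pathsIn P q p := by
  obtain ⟨hc, hm, h0, h1⟩ := hγ
  have hrev : MapsTo (fun u : ℝ => 1 - u) (Icc 0 1) (Icc 0 1) :=
    fun _ ⟨h0, h1⟩ => ⟨by linarith, by linarith⟩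
  exact ⟨hc.comp (by fun_prop) hrev, hm.comp hrev, by simp [h1], by simp [h0]⟩

theorem concatPath_mem_pathsIn (hγ : γ ∈ pathsIn P p q) (hδ : δ ∈ pathsIn P q r) :
    concatPath γ δ ∈ pathsIn P p r := by
  obtain ⟨hγc, hγm, hγ0, hγ1⟩ := hγ
  obtain ⟨hδc, hδm, hδ0, hδ1⟩ := hδ
  have h : γ 1 = δ 0 := hγ1.trans hδ0.symm
  refine ⟨continuousOn_concatPath hγc hδc h, mapsTo_concatPath hγm hδm h, ?_, ?_⟩
  · simp [concatPath, hγ0]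
  · norm_num [concatPath, hδ1]

end Paths

theorem geoDist_comm (P : Set E2) (p q : E2) : geoDist P p q = geoDist P q p := by
  suffices ∀ p q, geoDist P q p ≤ geoDist P p q from le_antisymm (this q p) (this p q)
  refine fun p q => le_iInf₂ fun γ hγ => ?_
  rw [← eVariationOn_comp_one_sub]
  exact iInf₂_le _ (comp_one_sub_mem_pathsIn hγ)

theorem geoDist_triangle (P : Set E2) (p q r : E2) :
    geoDist P p r ≤ geoDist P p q + geoDist P q r := by
  simp only [geoDist, ENNReal.iInf_add, ENNReal.add_iInf]
  refine le_iInf₂ fun δ hδ => le_iInf₂ fun γ hγ => ?_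
  rw [← eVariationOn_concatPath (hγ.2.2.2.trans hδ.2.2.1.symm)]
  exact iInf₂_le _ (concatPath_mem_pathsIn hγ hδ)

theorem le_of_between_of_le {α : Type*} (d : α → α → ℝ≥0∞) (hcomm : ∀ p q, d p q = d q p)
    (htri : ∀ p q r, d p r ≤ d p q + d q r) {s x y t : α} (hfin : d s x ≠ ⊤)
    (hon : d s y + d y x = d s x) (hcell : d x s ≤ d x t) : d y s ≤ d y t := by
  have hyx : d y x ≠ ⊤ := (ENNReal.add_ne_top.mp (hon ▸ hfin)).2
  refine (ENNReal.add_le_add_iff_left hyx).mp ?_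
  calc d y x + d y s = d s x := by rw [hcomm y s, add_comm, hon]
    _ = d x s := hcomm s x
    _ ≤ d x t := hcell
    _ ≤ d x y + d y t := htri x y t
    _ = d y x + d y t := by rw [hcomm x y]

theorem point_on_shortest_path_in_cell_general (P : Set E2) (S : Finset E2)
    (s x y : E2)
    (hfin : geoDist P s x ≠ ⊤)
    (hon : geoDist P s y + geoDist P y x = geoDist P s x)
    (hcell : ∀ t ∈ S, geoDist P x s ≤ geoDist P x t) :
    ∀ t ∈ S, geoDist P y s ≤ geoDist P y t := fun t ht =>
  le_of_between_of_le (geoDist P) (geoDist_comm P) (geoDist_triangle P) hfin hon (hcell t ht)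

theorem point_on_shortest_path_in_cell (P : Set E2) (S : Finset E2) (hS : ↑S ⊆ P)
    (s x y : E2) (hs : s ∈ P) (hx : x ∈ P) (hy : y ∈ P)
    (hfin : geoDist P s x ≠ ⊤)
    (hon : geoDist P s y + geoDist P y x = geoDist P s x)
    (hcell : ∀ t ∈ S, geoDist P x s ≤ geoDist P x t) :
    ∀ t ∈ S, geoDist P y s ≤ geoDist P y t :=
  point_on_shortest_path_in_cell_general P S s x y hfin hon hcell

end
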